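/- arXiv:2206.07337 — 4 statements merged into one kernel-verified Lean document; each statement's English description precedes it below -/
import Mathlib

section
/- Let R be an integral domain of characteristic different from 2, with fraction field F. Let n ≥ 1, 1 ≤ r ≤ n, let B ∈ 𝓗_n(R) be half-integral over R, and let X ∈ M_{n,r}(R). Then, as an identity in F, 2^{2⌊r/2⌋}·det(ᵗX·B·X) = Σ b^{(r)}_{𝐢,𝐣}·X(𝐢)·X(𝐣), where the sum ranges over all pairs (𝐢,𝐣) ∈ 𝓘_r×𝓘_r with 𝐢 = 𝐣 or 𝐢 strictly preceding 𝐣 in the lexicographic order. -/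
open scoped Classical
open Matrix

/-- Strictly increasing sequences of length `r` with values in `Fin n`. -/
abbrev Inc (r n : ℕ) := {f : Fin r → Fin n // ∀ k l : Fin r, k < l → f k < f l}

/-- `b^{(r)}_{i,j} = 2^(2⌊r/2⌋+1-δ_{i,j}) · det B(i;j)`. -/
noncomputable def bval {F : Type} [Field F] {n : ℕ} (r : ℕ)
    (B : Matrix (Fin n) (Fin n) F) (i j : Inc r n) : F :=
  (2 : F) ^ (2 * (r / 2) + 1 - (if i = j then 1 else 0)) * (B.submatrix i.1 j.1).det

/-- `i` strictly precedes `j` in the lexicographic order. -/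
def lexLt {r n : ℕ} (i j : Inc r n) : Prop :=
  ∃ k : Fin r, (∀ l : Fin r, l < k → i.1 l = j.1 l) ∧ i.1 k < j.1 k

lemma Inc.strictMono {r n : ℕ} (i : Inc r n) : StrictMono i.1 := fun a b h => i.2 a b h

/-- The equivalence between pairs (strictly increasing map, permutation) and
injective maps `Fin r → Fin n`. -/
noncomputable def incPermEquiv (r n : ℕ) :
    (Inc r n × Equiv.Perm (Fin r)) ≃ {p : Fin r → Fin n // Function.Injective p} := by
  refine Equiv.ofBijective
    (fun q => ⟨q.1.1 ∘ q.2, q.1.strictMono.injective.comp q.2.injective⟩) ⟨?_, ?_⟩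
  · rintro ⟨i, σ⟩ ⟨i', σ'⟩ h
    have hfun : i.1 ∘ ⇑σ = i'.1 ∘ ⇑σ' := congrArg Subtype.val h
    have hrange : Set.range i.1 = Set.range i'.1 := by
      rw [← σ.surjective.range_comp i.1, ← σ'.surjective.range_comp i'.1, hfun]
    have inst : WellFoundedLT (Fin r) := inferInstance
    have hi : i.1 = i'.1 :=
      (@StrictMono.range_inj (Fin r) (Fin n) _ _ inst i.1 i'.1
        i.strictMono i'.strictMono).mp hrange
    have hσ : ⇑σ = ⇑σ' := by
      funext k
      have h1 : i.1 (σ k) = i.1 (σ' k) := by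
        have := congrFun hfun k
        simpa [hi] using this
      exact i.strictMono.injective h1
    exact Prod.ext (Subtype.ext hi) (Equiv.coe_fn_injective hσ)
  · rintro ⟨p, hp⟩
    set s : Finset (Fin n) := Finset.univ.image p with hs_def
    have hs : s.card = r := by
      rw [hs_def, Finset.card_image_of_injective _ hp, Finset.card_univ, Fintype.card_fin]
    have hmem : ∀ k, p k ∈ s := fun k => Finset.mem_image_of_mem p (Finset.mem_univ k)
    set i : Inc r n := ⟨⇑(s.orderEmbOfFin hs), fun a b hab => (s.orderEmbOfFin hs).strictMono hab⟩
      with hi_def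
    set g : Fin r → Fin r := fun k => (s.orderIsoOfFin hs).symm ⟨p k, hmem k⟩ with hg_def
    have hginj : Function.Injective g := by
      intro a b hab
      have h2 : (⟨p a, hmem a⟩ : s) = ⟨p b, hmem b⟩ := (s.orderIsoOfFin hs).symm.injective hab
      exact hp (congrArg Subtype.val h2)
    have hig : ∀ k, i.1 (g k) = p k := by
      intro k
      have h3 : (s.orderIsoOfFin hs) (g k) = ⟨p k, hmem k⟩ := by
        rw [hg_def]; exact (s.orderIsoOfFin hs).apply_symm_apply _
      have h4 := congrArg Subtype.val h3
      rwa [Finset.coe_orderIsoOfFin_apply] at h4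
    refine ⟨⟨i, Equiv.ofBijective g (Finite.injective_iff_bijective.mp hginj)⟩, ?_⟩
    exact Subtype.ext (funext fun k => hig k)

/-- The Cauchy–Binet formula. -/
theorem cauchy_binet {F : Type} [CommRing F] {r n : ℕ}
    (M : Matrix (Fin r) (Fin n) F) (N : Matrix (Fin n) (Fin r) F) :
    (M * N).det = ∑ i : Inc r n, (M.submatrix id i.1).det * (N.submatrix i.1 id).det := by
  have hA : (M * N).det
      = ∑ p : Fin r → Fin n, (∏ k, N (p k) k) * (M.submatrix id p).det := by
    rw [Matrix.det_apply']
    simp only [Matrix.mul_apply, Finset.prod_univ_sum, Fintype.piFinset_univ, Finset.mul_sum]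
    rw [Finset.sum_comm]
    refine Finset.sum_congr rfl fun p _ => ?_
    rw [Matrix.det_apply', Finset.mul_sum]
    refine Finset.sum_congr rfl fun σ _ => ?_
    simp only [Matrix.submatrix_apply, id_eq, Finset.prod_mul_distrib]
    ring
  have hvan : ∀ p : Fin r → Fin n, ¬ Function.Injective p → (M.submatrix id p).det = 0 := by
    intro p hp
    rw [← Matrix.det_transpose, Matrix.transpose_submatrix]
    rw [Function.not_injective_iff] at hp
    obtain ⟨a, b, hab, hne⟩ := hp
    refine Matrix.det_zero_of_row_eq hne (funext fun c => ?_)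
    simp [Matrix.submatrix_apply, hab]
  rw [hA, ← Finset.sum_filter_add_sum_filter_not Finset.univ
    (fun p : Fin r → Fin n => Function.Injective p)]
  have h0 : ∑ p ∈ Finset.univ.filter (fun p : Fin r → Fin n => ¬ Function.Injective p),
      (∏ k, N (p k) k) * (M.submatrix id p).det = 0 :=
    Finset.sum_eq_zero fun p hp => by
      rw [hvan p (Finset.mem_filter.mp hp).2, mul_zero]
  rw [h0, add_zero]
  rw [Finset.sum_subtype (p := fun p : Fin r → Fin n => Function.Injective p) _ (by simp)
    (fun p : Fin r → Fin n => (∏ k, N (p k) k) * (M.submatrix id p).det)]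
  rw [← Equiv.sum_comp (incPermEquiv r n)
    (fun q : {p : Fin r → Fin n // Function.Injective p} =>
      (∏ k, N (q.1 k) k) * (M.submatrix id q.1).det)]
  rw [Fintype.sum_prod_type]
  refine Finset.sum_congr rfl fun i _ => ?_
  have hsub : ∀ σ : Equiv.Perm (Fin r),
      (M.submatrix id (i.1 ∘ ⇑σ)).det
        = ((Equiv.Perm.sign σ : ℤ) : F) * (M.submatrix id i.1).det := by
    intro σ
    have h5 : M.submatrix id (i.1 ∘ ⇑σ) = (M.submatrix id i.1).submatrix id ⇑σ := by
      rw [Matrix.submatrix_submatrix]; rfl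
    rw [h5, Matrix.det_permute']
  calc ∑ σ : Equiv.Perm (Fin r),
        (∏ k, N (((incPermEquiv r n (i, σ)).1 : Fin r → Fin n) k) k)
          * (M.submatrix id ((incPermEquiv r n (i, σ)).1 : Fin r → Fin n)).det
      = ∑ σ : Equiv.Perm (Fin r),
        (M.submatrix id i.1).det
          * (((Equiv.Perm.sign σ : ℤ) : F) * ∏ k, (N.submatrix i.1 id) (σ k) k) := by
        refine Finset.sum_congr rfl fun σ _ => ?_
        have hcoe : ((incPermEquiv r n (i, σ)).1 : Fin r → Fin n) = i.1 ∘ ⇑σ := rfl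
        rw [hcoe, hsub σ]
        simp only [Matrix.submatrix_apply, id_eq, Function.comp_apply]
        ring
    _ = (M.submatrix id i.1).det * (N.submatrix i.1 id).det := by
        rw [← Finset.mul_sum]
        congr 1
        rw [Matrix.det_apply']

lemma lexLt_irrefl {r n : ℕ} (i : Inc r n) : ¬ lexLt i i := by
  rintro ⟨k, -, hk⟩; exact lt_irrefl _ hk

lemma lexLt_asymm {r n : ℕ} {i j : Inc r n} (h : lexLt i j) : ¬ lexLt j i := by
  obtain ⟨k, hk1, hk2⟩ := h
  rintro ⟨k', hk1', hk2'⟩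
  rcases lt_trichotomy k k' with h | h | h
  · exact absurd (hk1' k h).symm (ne_of_lt hk2)
  · subst h; exact absurd (lt_trans hk2 hk2') (lt_irrefl _)
  · exact absurd (hk1 k' h) (ne_of_gt hk2')

lemma lexLt_total {r n : ℕ} {i j : Inc r n} (h : i ≠ j) : lexLt i j ∨ lexLt j i := by
  have hne : i.1 ≠ j.1 := fun hc => h (Subtype.ext hc)
  set T := Finset.univ.filter (fun k : Fin r => i.1 k ≠ j.1 k) with hT_def
  have hT : T.Nonempty := by
    rw [hT_def, Finset.filter_nonempty_iff]
    by_contra hc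
    push_neg at hc
    exact hne (funext fun k => hc k (Finset.mem_univ k))
  set k := T.min' hT with hk_def
  have hkT : k ∈ T := T.min'_mem hT
  have hkne : i.1 k ≠ j.1 k := (Finset.mem_filter.mp hkT).2
  have hbelow : ∀ l, l < k → i.1 l = j.1 l := by
    intro l hl
    by_contra hc
    have hlT : l ∈ T := Finset.mem_filter.mpr ⟨Finset.mem_univ l, hc⟩
    exact absurd (T.min'_le l hlT) (not_le.mpr hl)
  rcases lt_or_gt_of_ne hkne with h' | h'
  · exact Or.inl ⟨k, hbelow, h'⟩
  · exact Or.inr ⟨k, fun l hl => (hbelow l hl).symm, h'⟩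

theorem statement1 (R : Type) [CommRing R] [IsDomain R] (hchar : ringChar R ≠ 2)
    (F : Type) [Field F] [Algebra R F] [IsFractionRing R F]
    (n r : ℕ) (hn : 1 ≤ n) (hr : 1 ≤ r) (hrn : r ≤ n)
    (B : Matrix (Fin n) (Fin n) F) (hsymm : B.IsSymm)
    (hdiag : ∀ i, ∃ c : R, algebraMap R F c = B i i)
    (hoff : ∀ i j, i ≠ j → ∃ c : R, algebraMap R F c = 2 * B i j)
    (X : Matrix (Fin n) (Fin r) R) :
    (2 : F) ^ (2 * (r / 2)) *
        ((X.map (algebraMap R F))ᵀ * B * X.map (algebraMap R F)).det =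
      ∑ q ∈ Finset.univ.filter
          (fun q : Inc r n × Inc r n => q.1 = q.2 ∨ lexLt q.1 q.2),
        bval r B q.1 q.2 *
          ((X.map (algebraMap R F)).submatrix q.1.1 id).det *
          ((X.map (algebraMap R F)).submatrix q.2.1 id).det := by
  set Y : Matrix (Fin n) (Fin r) F := X.map (algebraMap R F) with hY
  set Yd : Inc r n → F := fun i => (Y.submatrix i.1 id).det with hYd
  set g : Inc r n × Inc r n → F :=
    fun q => (B.submatrix q.1.1 q.2.1).det * Yd q.1 * Yd q.2 with hg
  have hgsymm : ∀ p q : Inc r n, g (p, q) = g (q, p) := by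
    intro p q
    have h1 : B.submatrix q.1 p.1 = (B.submatrix p.1 q.1)ᵀ := by
      ext a b
      simp [Matrix.submatrix_apply, hsymm.apply]
    simp only [hg]
    rw [h1, Matrix.det_transpose]
    ring
  -- Cauchy–Binet twice
  have hCB : (Yᵀ * B * Y).det = ∑ q : Inc r n × Inc r n, g q := by
    rw [cauchy_binet (Yᵀ * B) Y]
    have hstep : ∀ i : Inc r n, ((Yᵀ * B).submatrix id i.1).det
        = ∑ j : Inc r n, Yd j * (B.submatrix j.1 i.1).det := by
      intro i
      have h1 : (Yᵀ * B).submatrix id i.1 = Yᵀ * B.submatrix id i.1 := by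
        have := Matrix.submatrix_mul Yᵀ B id id i.1 Function.bijective_id
        simpa using this
      rw [h1, cauchy_binet]
      refine Finset.sum_congr rfl fun j _ => ?_
      have e1 : (Yᵀ.submatrix id j.1).det = Yd j := by
        rw [show Yᵀ.submatrix id j.1 = (Y.submatrix j.1 id)ᵀ from
          (Matrix.transpose_submatrix Y j.1 id).symm, Matrix.det_transpose]
      have e2 : (B.submatrix id i.1).submatrix j.1 id = B.submatrix j.1 i.1 := by
        rw [Matrix.submatrix_submatrix]
        rfl
      rw [e1, e2]
    calc ∑ i : Inc r n, ((Yᵀ * B).submatrix id i.1).det * (Y.submatrix i.1 id).det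
        = ∑ i : Inc r n, ∑ j : Inc r n, g (j, i) := by
          refine Finset.sum_congr rfl fun i _ => ?_
          rw [hstep i, Finset.sum_mul]
          refine Finset.sum_congr rfl fun j _ => ?_
          simp only [hg, hYd]
          ring
      _ = ∑ q : Inc r n × Inc r n, g q := by
          rw [Finset.sum_comm, ← Fintype.sum_prod_type]
  -- partition of all pairs
  set D : Finset (Inc r n × Inc r n) :=
    Finset.univ.filter (fun q : Inc r n × Inc r n => q.1 = q.2 ∨ lexLt q.1 q.2) with hD
  set L : Finset (Inc r n × Inc r n) :=
    Finset.univ.filter (fun q : Inc r n × Inc r n => lexLt q.1 q.2) with hL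
  set G : Finset (Inc r n × Inc r n) :=
    Finset.univ.filter (fun q : Inc r n × Inc r n => lexLt q.2 q.1) with hG
  have hDGdisj : Disjoint D G := by
    rw [Finset.disjoint_left]
    rintro ⟨a, b⟩ haD haG
    have h1 : a = b ∨ lexLt a b := (Finset.mem_filter.mp haD).2
    have h2 : lexLt b a := (Finset.mem_filter.mp haG).2
    rcases h1 with h1 | h1
    · subst h1; exact lexLt_irrefl a h2
    · exact lexLt_asymm h1 h2
  have huniv : (Finset.univ : Finset (Inc r n × Inc r n)) = D ∪ G := by
    ext q
    simp only [hD, hG, Finset.mem_union, Finset.mem_filter, Finset.mem_univ, true_and,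
      true_iff, iff_true]
    by_cases hq : q.1 = q.2
    · exact Or.inl (Or.inl hq)
    · rcases lexLt_total hq with h1 | h1
      · exact Or.inl (Or.inr h1)
      · exact Or.inr h1
  have hGL : ∑ q ∈ G, g q = ∑ q ∈ L, g q := by
    refine Finset.sum_nbij' (fun q => (q.2, q.1)) (fun q => (q.2, q.1)) ?_ ?_ ?_ ?_ ?_
    · rintro ⟨a, b⟩ hq
      simp only [hG, Finset.mem_filter, Finset.mem_univ, true_and] at hq
      simp only [hL, Finset.mem_filter, Finset.mem_univ, true_and]
      exact hq
    · rintro ⟨a, b⟩ hq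
      simp only [hL, Finset.mem_filter, Finset.mem_univ, true_and] at hq
      simp only [hG, Finset.mem_filter, Finset.mem_univ, true_and]
      exact hq
    · rintro ⟨a, b⟩ _; rfl
    · rintro ⟨a, b⟩ _; rfl
    · rintro ⟨a, b⟩ _; exact hgsymm a b
  have hDfilter : D.filter (fun q : Inc r n × Inc r n => ¬ q.1 = q.2) = L := by
    ext q
    simp only [hD, hL, Finset.filter_filter, Finset.mem_filter, Finset.mem_univ, true_and]
    constructor
    · rintro ⟨h1 | h1, h2⟩
      · exact absurd h1 h2
      · exact h1
    · intro h1
      exact ⟨Or.inr h1, fun hc => lexLt_irrefl q.2 (hc ▸ h1)⟩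
  -- rewrite the RHS terms
  have hterm : ∀ q ∈ D, bval r B q.1 q.2 * Yd q.1 * Yd q.2
      = (2 : F) ^ (2 * (r / 2)) * g q
        + (if q.1 = q.2 then 0 else (2 : F) ^ (2 * (r / 2)) * g q) := by
    rintro ⟨a, b⟩ _
    by_cases hq : a = b
    · subst hq
      rw [bval, if_pos rfl, if_pos rfl, Nat.add_sub_cancel, add_zero]
      simp only [hg]
      ring
    · rw [bval, if_neg hq, if_neg hq, Nat.sub_zero, pow_succ]
      simp only [hg]
      ring
  have hRHS : ∑ q ∈ D, bval r B q.1 q.2 * Yd q.1 * Yd q.2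
      = (2 : F) ^ (2 * (r / 2)) * ∑ q ∈ D, g q
        + (2 : F) ^ (2 * (r / 2)) * ∑ q ∈ L, g q := by
    rw [Finset.sum_congr rfl hterm, Finset.sum_add_distrib, ← Finset.mul_sum]
    congr 1
    rw [← Finset.sum_filter_add_sum_filter_not D (fun q : Inc r n × Inc r n => q.1 = q.2)]
    rw [Finset.sum_eq_zero (fun q hq => if_pos (Finset.mem_filter.mp hq).2), zero_add]
    rw [Finset.sum_congr rfl
      (fun q hq => if_neg (Finset.mem_filter.mp hq).2), hDfilter]
    rw [Finset.mul_sum]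
  have hmain : (2 : F) ^ (2 * (r / 2)) * (Yᵀ * B * Y).det
      = ∑ q ∈ D, bval r B q.1 q.2 * Yd q.1 * Yd q.2 := by
    rw [hCB, huniv, Finset.sum_union hDGdisj, hGL, hRHS]
    ring
  exact hmain
end

section
/- Let H = (a_1,…,a_n; ε_1,…,ε_n) be a naive EGK datum of length n. Then 𝓕(H;Y,X^{−1}) = ζ·𝓕(H;Y,X), where ζ = ε_n if n is odd and ζ = 1 if n is even. -/
open scoped Classical

noncomputable section

/-- `𝔢_i` attached to a sequence `a` (1-based index `i`; `a k` is `a_{k+1}`). -/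
def eInv (a : ℕ → ℕ) (i : ℕ) : ℕ :=
  if Odd i then ∑ k ∈ Finset.range i, a k
  else 2 * ((∑ k ∈ Finset.range i, a k) / 2)

/-- A naive EGK datum of length `n`, given by `a k = a_{k+1}` and `ε k = ε_{k+1}`. -/
structure IsNEGK (n : ℕ) (a : ℕ → ℕ) (ε : ℕ → ℤ) : Prop where
  pos : 0 < n
  mono : ∀ i, i + 1 < n → a i ≤ a (i + 1)
  sign : ∀ i, i < n → ε i = 0 ∨ ε i = 1 ∨ ε i = -1
  cond2 : ∀ i, i < n → Odd i → (ε i ≠ 0 ↔ Even (∑ k ∈ Finset.range (i + 1), a k))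
  cond3 : ∀ i, i < n → Even i → ε i ≠ 0
  cond4 : ε 0 = 1
  cond5 : ∀ i, i < n → 2 ≤ i → Even i → Even (∑ k ∈ Finset.range i, a k) →
    ε i = ε (i - 1) ^ (a i + a (i - 1)) * ε (i - 2)

/-- The factors `C` (for even `i`) and `D` (for odd `i`), written in the variables
`u = X^{1/2}`, `v = Y^{1/2}`. -/
def Cfun {K : Type} [Field K] (i : ℕ) (e et : ℕ) (ξ : K) (v u : K) : K :=
  if Even i then
    v ^ et * u ^ (-((e : ℤ) - (et : ℤ)) - 2) * (1 - ξ * (v⁻¹) ^ 2 * u ^ 2) /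
      ((u⁻¹) ^ 2 - u ^ 2)
  else v ^ et * u ^ (-((e : ℤ) - (et : ℤ))) / (1 - ξ * u ^ 2)

/-- The rational function `𝓕(H;Y,X)` of a naive EGK datum of length `N`,
written as a function of `v = Y^{1/2}` and `u = X^{1/2}`. -/
def FF {K : Type} [Field K] (a : ℕ → ℕ) (ε : ℕ → ℤ) : ℕ → K → K → K
  | 0 => fun _ _ => 1
  | 1 => fun _ u => ∑ i ∈ Finset.range (a 0 + 1), u ^ (2 * (i : ℤ) - (a 0 : ℤ))
  | (m + 2) => fun v u =>
      (Cfun (m + 2) (eInv a (m + 2)) (eInv a (m + 1))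
          (if Even (m + 2) then ((ε (m + 1) : ℤ) : K) else ((ε m : ℤ) : K)) v u) *
            FF a ε (m + 1) v (v * u) +
        (if Even (m + 2) then (1 : K) else ((ε (m + 1) : ℤ) : K)) *
          (Cfun (m + 2) (eInv a (m + 2)) (eInv a (m + 1))
            (if Even (m + 2) then ((ε (m + 1) : ℤ) : K) else ((ε m : ℤ) : K)) v u⁻¹) *
            FF a ε (m + 1) v (v * u⁻¹)

/-- The field `ℚ(Y^{1/2})(X^{1/2})` in which the generic identities are stated. -/
abbrev KK : Type := RatFunc (RatFunc ℚ)

/-- The generic point `u = X^{1/2}`. -/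
def uGen : KK := RatFunc.X

/-- The generic point `v = Y^{1/2}`. -/
def vGen : KK := RatFunc.C RatFunc.X

end

lemma statement9_aux (A B P Q e : KK) (he : e * e = 1) :
    A * P + e * B * Q = e * (B * Q + e * A * P) := by
  linear_combination (-(A * P)) * he

lemma statement9_sum (N : ℕ) :
    ∑ i ∈ Finset.range (N + 1), (uGen⁻¹) ^ (2 * (i : ℤ) - (N : ℤ)) =
      ∑ i ∈ Finset.range (N + 1), uGen ^ (2 * (i : ℤ) - (N : ℤ)) := by
  rw [← Finset.sum_range_reflect]
  refine Finset.sum_congr rfl fun j hj => ?_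
  have hj' : j ≤ N := Nat.lt_succ_iff.mp (Finset.mem_range.mp hj)
  rw [inv_zpow']
  congr 1
  have : N + 1 - 1 - j = N - j := by omega
  rw [this]
  push_cast [Nat.cast_sub hj']
  ring

theorem statement9 (n : ℕ) (a : ℕ → ℕ) (ε : ℕ → ℤ) (h : IsNEGK n a ε) :
    FF a ε n vGen uGen⁻¹ =
      (if Odd n then ((ε (n - 1) : ℤ) : KK) else 1) * FF a ε n vGen uGen := by
  match n with
  | 0 => norm_num [FF]
  | 1 =>
    have h0 : ε 0 = 1 := h.cond4
    simp only [FF, if_pos (by norm_num : Odd 1), show (1:ℕ) - 1 = 0 from rfl, h0,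
      Int.cast_one, one_mul]
    exact statement9_sum (a 0)
  | (m + 2) =>
    by_cases hpar : Even (m + 2)
    · simp only [FF, inv_inv, if_pos hpar, if_neg (Nat.not_odd_iff_even.mpr hpar)]
      ring
    · have hodd : Odd (m + 2) := Nat.not_even_iff_odd.mp hpar
      have hev : Even (m + 1) := by
        rcases Nat.even_or_odd (m + 1) with h' | h'
        · exact h'
        · exact absurd (h'.add_one) hpar
      have hne : ε (m + 1) ≠ 0 := h.cond3 (m + 1) (by omega) hev
      have hsgn := h.sign (m + 1) (by omega)
      have hsq : ε (m + 1) * ε (m + 1) = 1 := by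
        rcases hsgn with h' | h' | h' <;> simp_all
      have he : ((ε (m + 1) : ℤ) : KK) * ((ε (m + 1) : ℤ) : KK) = 1 := by
        rw [← Int.cast_mul, hsq, Int.cast_one]
      have hm1 : m + 2 - 1 = m + 1 := rfl
      simp only [FF, inv_inv, if_neg hpar, if_pos hodd, hm1]
      exact statement9_aux _ _ _ _ _ he
end

section
/- Let H = (a_1,…,a_n; ε_1,…,ε_n) be a naive EGK datum of even length n ≥ 2. Write a_i(Y) := a_i(H,Y) and b_i(Y) := a_i(H_{n−1},Y), with the convention b_m(Y) := 0 if m < 0 or m > 𝔢_{n−1}. Then for every 0 ≤ l ≤ 𝔢_n: a_l(Y) = Σ_{j≥0} b_{l−2j}(Y)·Y^{l−2j} − ε_n·Σ_{j≥0} b_{l−1−2j}(Y)·Y^{l−2−2j} − Σ_{j≥0} b_{𝔢_n+2−l+2j}(Y)·Y^{𝔢_n+2−l+2j} + ε_n·Σ_{j≥0} b_{𝔢_n+1−l+2j}(Y)·Y^{𝔢_n−l+2j} (all sums are finite by the vanishing convention on b). -/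
open scoped Classical

/-- `Y^m` (with `m ∈ ℤ`), i.e. `v^{2m}` at the generic point. -/
noncomputable def Yz (m : ℤ) : KK := vGen ^ (2 * m)

/-! Multiplying the recursion for `𝓖(H; Y, X)` by `1 - X²` clears the denominators of `C_n`:
with `y = X` and `c = ε_n Y⁻¹`,
`𝓖(H)(y) (1 - y²) = (1 - c y) 𝓖(H_{n-1})(Y y) - y^{𝔢_n + 2} (1 - c y⁻¹) 𝓖(H_{n-1})(Y y⁻¹)`,
where the two specialisations of `𝓖(H_{n-1})` come from substituting the transcendental
elements `Y^{1/2} X^{±1/2}` for `X^{1/2}`. The coefficients `r_m` of the right-hand side satisfy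
`r_{𝔢_n + 2 - m} = -r_m`; hence the telescoped sums `∑_j r_{l - 2j}`, which are the claimed
formula, vanish for `l = 𝔢_n + 1, 𝔢_n + 2`, and the quotient by `1 - y²` is a polynomial of
degree `𝔢_n`. Powers of `X` are linearly independent over `ℚ(Y^{1/2})`, so its coefficients
are the `a_l`. -/

section Transcendence

variable {K L : Type*} [Field K] [Field L] [Algebra K L] {x : L}

theorem Transcendental.coeff_eq_of_sum_eq (hx : Transcendental K x) {M : ℕ} {c d : ℕ → L}
    (hc : ∀ i, c i ∈ (⊥ : Subalgebra K L)) (hd : ∀ i, d i ∈ (⊥ : Subalgebra K L))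
    (h : ∑ i ∈ Finset.range M, c i * x ^ i = ∑ i ∈ Finset.range M, d i * x ^ i) {l : ℕ}
    (hl : l < M) : c l = d l := by
  choose g hg using fun i ↦ Algebra.mem_bot.1 (sub_mem (hc i) (hd i))
  have hp : ∑ i ∈ Finset.range M, Polynomial.C (g i) * Polynomial.X ^ i = 0 :=
    transcendental_iff.1 hx _ (by simp [map_sum, hg, sub_mul, h])
  have hgl : g l = 0 := by
    simpa [Polynomial.finsetSum_coeff, Polynomial.coeff_C_mul_X_pow, hl] using
      congrArg (Polynomial.coeff · l) hp
  rw [← sub_eq_zero, ← hg l, hgl, map_zero]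

theorem Transcendental.algebraMap_mul (hx : Transcendental K x) {c : K} (hc : c ≠ 0) :
    Transcendental K (algebraMap K L c * x) := by
  have h := hx.aeval (Polynomial.C c * Polynomial.X) (by simp [hc]) (by simp [hc])
  rwa [map_mul, Polynomial.aeval_C, Polynomial.aeval_X] at h

theorem Transcendental.inv (hx : Transcendental K x) : Transcendental K x⁻¹ :=
  fun h ↦ hx (IsAlgebraic.inv_iff.1 h)

theorem Transcendental.pow_ne_one (hx : Transcendental K x) {n : ℕ} (hn : n ≠ 0) :
    x ^ n ≠ 1 := fun h ↦
  Polynomial.X_pow_sub_C_ne_zero (Nat.pos_of_ne_zero hn) (1 : K)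
    (transcendental_iff.1 hx _ (by simp [h]))

noncomputable def RatFunc.aevalOfTranscendental (hx : Transcendental K x) :
    RatFunc K →ₐ[K] L :=
  RatFunc.liftAlgHom (Polynomial.aeval x)
    (nonZeroDivisors_le_comap_nonZeroDivisors_of_injective _ (transcendental_iff_injective.1 hx))

theorem RatFunc.aevalOfTranscendental_X (hx : Transcendental K x) :
    RatFunc.aevalOfTranscendental hx RatFunc.X = x := by
  simp [RatFunc.aevalOfTranscendental, RatFunc.liftAlgHom_apply]

theorem RatFunc.mem_bot_iff_exists_C {x : RatFunc K} :
    x ∈ (⊥ : Subalgebra K (RatFunc K)) ↔ ∃ g, x = RatFunc.C g := by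
  rw [Algebra.mem_bot, RatFunc.algebraMap_eq_C]
  exact exists_congr fun _ ↦ eq_comm

end Transcendence

section Recursion

variable {K L : Type} [Field K] [Field L]

theorem map_Cfun (φ : K →+* L) (i e et : ℕ) (ξ v u : K) :
    φ (Cfun i e et ξ v u) = Cfun i e et (φ ξ) (φ v) (φ u) := by
  unfold Cfun
  split_ifs <;> simp [map_div₀, map_zpow₀, map_inv₀]

theorem map_FF (a : ℕ → ℕ) (ε : ℕ → ℤ) (φ : K →+* L) :
    ∀ m (v u : K), φ (FF a ε m v u) = FF a ε m (φ v) (φ u)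
  | 0, _, _ => by simp [FF]
  | 1, _, _ => by simp [FF, map_zpow₀]
  | m + 2, v, u => by
    simp only [FF, map_add, map_mul, map_Cfun, map_FF a ε φ (m + 1), apply_ite φ, map_inv₀,
      map_intCast, map_one]

theorem Cfun_even_clear_denominators {i e et : ℕ} (hi : Even i) (he : et ≤ e) (ξ : K) {v u : K}
    (hu : u ≠ 0) (hu4 : (u ^ 2) ^ 2 ≠ 1) (G₁ G₂ : K) :
    u ^ e * (Cfun i e et ξ v u * G₁ + Cfun i e et ξ v u⁻¹ * G₂) * (1 - (u ^ 2) ^ 2) =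
      (1 - ξ * v⁻¹ ^ 2 * u ^ 2) * ((v * u) ^ et * G₁) -
        (u ^ 2) ^ (e + 2) * (1 - ξ * v⁻¹ ^ 2 * (u ^ 2)⁻¹) * ((v * u⁻¹) ^ et * G₂) := by
  obtain ⟨d, rfl⟩ := Nat.exists_eq_add_of_le he
  have hexp : -(((et + d : ℕ) : ℤ) - et) - 2 = -((d + 2 : ℕ) : ℤ) := by push_cast; ring
  rw [← pow_mul] at hu4
  simp only [Cfun, if_pos hi, hexp, zpow_neg, zpow_natCast, mul_pow, inv_pow, inv_inv,
    ← pow_mul, Nat.reduceMul]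
  field_simp [sub_ne_zero.2 hu4, sub_ne_zero.2 hu4.symm]
  ring

end Recursion

section Telescoping

open Finset

variable {R : Type*} [CommRing R]

theorem sum_range_mul_pow_of_vanish (f : ℤ → R) (y : R) {d M : ℕ} (hM : d < M)
    (hf : ∀ m : ℕ, d < m → m < M → f m = 0) :
    ∑ m ∈ range M, f m * y ^ m = ∑ m ∈ range (d + 1), f m * y ^ m :=
  (sum_subset (range_subset_range.2 hM) fun m hm hm' ↦ by
    simp only [mem_range] at hm hm'
    rw [hf m (by omega) hm, zero_mul]).symm

theorem sum_range_shift_mul_pow (f : ℤ → R) (hf : ∀ m : ℤ, m < 0 → f m = 0) (y : R) (M : ℕ) :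
    ∀ s : ℕ, ∑ m ∈ range (M + s), f (m - s) * y ^ m = y ^ s * ∑ m ∈ range M, f m * y ^ m
  | 0 => by simp
  | s + 1 => by
    rw [← add_assoc, sum_range_succ', hf _ (by omega), zero_mul, add_zero, pow_succ', mul_assoc,
      ← sum_range_shift_mul_pow f hf y M s, mul_sum]
    refine sum_congr rfl fun m _ ↦ ?_
    push_cast
    ring_nf

theorem sum_range_reflect_mul_pow {K : Type*} [Field K] (f : ℤ → K) {y : K} (hy : y ≠ 0)
    (s : ℕ) :
    ∑ m ∈ range (s + 1), f (s - m) * y ^ m = y ^ s * ∑ m ∈ range (s + 1), f m * y⁻¹ ^ m := by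
  rw [← sum_range_reflect, mul_sum]
  refine sum_congr rfl fun m hm ↦ ?_
  have hms : m ≤ s := Nat.lt_succ_iff.1 (mem_range.1 hm)
  rw [Nat.add_sub_cancel, Nat.cast_sub hms, sub_sub_cancel, ← Nat.sub_add_cancel hms, pow_add,
    inv_pow, Nat.add_sub_cancel]
  field_simp

variable (q : ℤ → R) (N : ℕ)

def downSum (l : ℤ) : R := ∑ j ∈ range N, q (l - 2 * j)

def upSum (l : ℤ) : R := ∑ j ∈ range N, q (l + 2 * j)

variable (c : R) (e : ℕ)

def egkNumCoeff (m : ℤ) : R :=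
  q m - c * q (m - 1) - q (e + 2 - m) + c * q (e + 1 - m)

-- With `q m = b_m Y^m` and `c = ε_n Y⁻¹` this is the right-hand side of the theorem, each
-- sum cut off after `N` terms.
def egkCoeff (l : ℤ) : R :=
  downSum q N l - c * downSum q N (l - 1) - upSum q N (e + 2 - l) + c * upSum q N (e + 1 - l)

theorem downSum_sub_downSum (l : ℤ) :
    downSum q N l - downSum q N (l - 2) = q l - q (l - 2 * N) := by
  rw [downSum, downSum, ← sum_sub_distrib]
  convert sum_range_sub' (fun j : ℕ ↦ q (l - 2 * j)) N using 3 <;> push_cast <;> ring_nf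

theorem upSum_sub_upSum (l : ℤ) :
    upSum q N l - upSum q N (l + 2) = q l - q (l + 2 * N) := by
  rw [upSum, upSum, ← sum_sub_distrib]
  convert sum_range_sub' (fun j : ℕ ↦ q (l + 2 * j)) N using 3 <;> push_cast <;> ring_nf

theorem downSum_eq_upSum {l l' : ℤ} (M : ℕ) (h : l = l' + 2 * M) :
    downSum q (M + 1) l = upSum q (M + 1) l' := by
  rw [downSum, upSum, ← sum_range_reflect]
  refine sum_congr rfl fun j hj ↦ ?_
  have := mem_range.1 hj
  congr 1
  push_cast [Nat.cast_sub (by omega : j ≤ M)]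
  omega

theorem egkCoeff_mem {S : Type*} [SetLike S R] [SubringClass S R] {s : S} (hq : ∀ m, q m ∈ s)
    (hc : c ∈ s) (l : ℤ) : egkCoeff q N c e l ∈ s := by
  have hdown : ∀ l, downSum q N l ∈ s := fun _ ↦ sum_mem fun _ _ ↦ hq _
  have hup : ∀ l, upSum q N l ∈ s := fun _ ↦ sum_mem fun _ _ ↦ hq _
  exact add_mem (sub_mem (sub_mem (hdown l) (mul_mem hc (hdown _))) (hup _)) (mul_mem hc (hup _))

section Support

variable {q} {et : ℕ} (hq : ∀ m : ℤ, m < 0 ∨ et < m → q m = 0)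
include hq

theorem downSum_of_neg {l : ℤ} (hl : l < 0) : downSum q N l = 0 :=
  sum_eq_zero fun _ _ ↦ hq _ (Or.inl (by omega))

theorem upSum_of_lt {l : ℤ} (hl : et < l) : upSum q N l = 0 :=
  sum_eq_zero fun _ _ ↦ hq _ (Or.inr (by omega))

theorem downSum_eq_of_le {l : ℤ} {M : ℕ} (hl : l < 2 * M) (hMN : M ≤ N) :
    downSum q N l = downSum q M l :=
  (sum_subset (range_subset_range.2 hMN) fun j _ hj ↦
    hq _ (Or.inl (by simp only [mem_range] at hj; omega))).symm

theorem upSum_eq_of_le {l : ℤ} {M : ℕ} (hl : et < l + 2 * M) (hMN : M ≤ N) :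
    upSum q N l = upSum q M l :=
  (sum_subset (range_subset_range.2 hMN) fun j _ hj ↦
    hq _ (Or.inr (by simp only [mem_range] at hj; omega))).symm

theorem egkCoeff_sub_egkCoeff (hN : e + et + 2 ≤ N) {l : ℤ} (hl : l ≤ e + 2) :
    egkCoeff q N c e l - egkCoeff q N c e (l - 2) = egkNumCoeff q c e l := by
  have h₁ := downSum_sub_downSum q N l
  have h₂ := downSum_sub_downSum q N (l - 1)
  have h₃ := upSum_sub_upSum q N (e + 2 - l)
  have h₄ := upSum_sub_upSum q N (e + 1 - l)
  rw [hq (l - 2 * N) (Or.inl (by omega))] at h₁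
  rw [hq (l - 1 - 2 * N) (Or.inl (by omega))] at h₂
  rw [hq (e + 2 - l + 2 * N) (Or.inr (by omega))] at h₃
  rw [hq (e + 1 - l + 2 * N) (Or.inr (by omega))] at h₄
  simp only [egkCoeff, egkNumCoeff, show l - 2 - 1 = l - 1 - 2 by ring,
    show (e : ℤ) + 2 - (l - 2) = e + 2 - l + 2 by ring,
    show (e : ℤ) + 1 - (l - 2) = e + 1 - l + 2 by ring]
  linear_combination h₁ - c * h₂ - h₃ + c * h₄

theorem egkCoeff_of_neg (he : et ≤ e) {l : ℤ} (hl : l < 0) : egkCoeff q N c e l = 0 := by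
  simp only [egkCoeff, downSum_of_neg N hq hl, downSum_of_neg N hq (by omega : l - 1 < 0),
    upSum_of_lt N hq (by omega : (et : ℤ) < e + 2 - l),
    upSum_of_lt N hq (by omega : (et : ℤ) < e + 1 - l)]
  ring

theorem egkCoeff_eq_of_le (hN : e + et + 2 ≤ N) {l : ℕ} (hl : l ≤ e) :
    egkCoeff q N c e l = downSum q (l + 1) l - c * downSum q (l + 1) (l - 1) -
      upSum q (et + 1) (e + 2 - l) + c * upSum q (et + 1) (e + 1 - l) := by
  rw [egkCoeff, downSum_eq_of_le N hq (by omega) (by omega : l + 1 ≤ N),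
    downSum_eq_of_le N hq (by omega) (by omega : l + 1 ≤ N),
    upSum_eq_of_le N hq (by omega) (by omega : et + 1 ≤ N),
    upSum_eq_of_le N hq (by omega) (by omega : et + 1 ≤ N)]

theorem egkCoeff_of_gt (he : et ≤ e) (he' : Even e) (hN : e + et + 2 ≤ N) {l : ℤ}
    (hl : e < l) (hl' : l ≤ e + 2) : egkCoeff q N c e l = 0 := by
  obtain ⟨k, rfl⟩ := he'
  have hdu : ∀ (l l' : ℤ) (M : ℕ), l = l' + 2 * M → M + 1 ≤ N → l' ≤ 1 → et < l + 2 →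
      downSum q N l = upSum q N l' := fun l l' M h hM hl' hl ↦ by
    rw [downSum_eq_of_le N hq (by omega : l < 2 * (M + 1)) hM,
      upSum_eq_of_le N hq (by omega : et < l' + 2 * (M + 1)) hM, downSum_eq_upSum q M h]
  obtain rfl | rfl : l = k + k + 1 ∨ l = k + k + 2 := by push_cast at hl hl' ⊢; omega
  · rw [egkCoeff, hdu _ 1 k (by ring) (by omega) le_rfl (by omega),
      hdu _ 0 k (by ring) (by omega) (by omega) (by omega)]
    push_cast
    ring_nf
  · rw [egkCoeff, hdu _ 0 (k + 1) (by push_cast; ring) (by omega) (by omega) (by omega),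
      hdu _ (-1) (k + 1) (by push_cast; ring) (by omega) (by omega) (by omega)]
    push_cast
    ring_nf

theorem sum_egkCoeff_mul_pow (he : et ≤ e) (he' : Even e) (hN : e + et + 2 ≤ N) (y : R) :
    (∑ l ∈ range (e + 1), egkCoeff q N c e l * y ^ l) * (1 - y ^ 2) =
      ∑ m ∈ range (e + 3), egkNumCoeff q c e m * y ^ m := by
  have htop := sum_range_mul_pow_of_vanish (egkCoeff q N c e) y (by omega : e < e + 3)
    fun m hm hm' ↦ egkCoeff_of_gt N c e hq he he' hN (by omega) (by omega)
  have hshift := sum_range_shift_mul_pow (egkCoeff q N c e)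
    (fun m hm ↦ egkCoeff_of_neg N c e hq he hm) y (e + 1) 2
  push_cast at hshift
  calc (∑ l ∈ range (e + 1), egkCoeff q N c e l * y ^ l) * (1 - y ^ 2)
      = ∑ m ∈ range (e + 3), egkCoeff q N c e m * y ^ m -
          ∑ m ∈ range (e + 1 + 2), egkCoeff q N c e (m - 2) * y ^ m := by
        rw [htop, hshift]; ring
    _ = ∑ m ∈ range (e + 3), egkNumCoeff q c e m * y ^ m := by
        rw [← sum_sub_distrib]
        refine sum_congr rfl fun m hm ↦ ?_
        rw [← sub_mul, egkCoeff_sub_egkCoeff N c e hq hN (by simp only [mem_range] at hm; omega)]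

end Support

theorem sum_egkNumCoeff_mul_pow {K : Type*} [Field K] {q : ℤ → K} (c : K) (e : ℕ) {et : ℕ}
    (hq : ∀ m : ℤ, m < 0 ∨ et < m → q m = 0) (he : et ≤ e) {y : K} (hy : y ≠ 0) :
    ∑ m ∈ range (e + 3), egkNumCoeff q c e m * y ^ m =
      (1 - c * y) * ∑ i ∈ range (et + 1), q i * y ^ i -
        y ^ (e + 2) * (1 - c * y⁻¹) * ∑ i ∈ range (et + 1), q i * y⁻¹ ^ i := by
  have htrunc : ∀ z : K, ∀ M, et < M →
      ∑ m ∈ range M, q m * z ^ m = ∑ i ∈ range (et + 1), q i * z ^ i := fun z M hM ↦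
    sum_range_mul_pow_of_vanish q z hM fun m hm _ ↦ hq m (Or.inr (by omega))
  have hS₁ := htrunc y (e + 3) (by omega)
  have hS₂ := sum_range_shift_mul_pow q (fun m hm ↦ hq m (Or.inl hm)) y (e + 2) 1
  have hS₃ := sum_range_reflect_mul_pow q hy (e + 2)
  have hS₄ := sum_range_reflect_mul_pow q hy (e + 1)
  rw [htrunc _ _ (by omega)] at hS₂ hS₃ hS₄
  push_cast at hS₂ hS₃ hS₄
  have hS₄' : ∑ m ∈ range (e + 3), q (e + 1 - m) * y ^ m =
      y ^ (e + 1) * ∑ i ∈ range (et + 1), q i * y⁻¹ ^ i := by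
    rw [sum_range_succ, hq _ (Or.inl (by push_cast; omega)), zero_mul, add_zero, ← hS₄]
  have hsplit : ∑ m ∈ range (e + 3), egkNumCoeff q c e m * y ^ m =
      ∑ m ∈ range (e + 3), q m * y ^ m - c * ∑ m ∈ range (e + 2 + 1), q (m - 1) * y ^ m -
        ∑ m ∈ range (e + 2 + 1), q (e + 2 - m) * y ^ m +
        c * ∑ m ∈ range (e + 3), q (e + 1 - m) * y ^ m := by
    simp only [mul_sum, ← sum_sub_distrib, ← sum_add_distrib, egkNumCoeff]
    exact sum_congr rfl fun m _ ↦ by ring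
  rw [hsplit, hS₁, hS₂, hS₃, hS₄']
  field_simp
  ring

end Telescoping

theorem IsNEGK.monotoneOn {n : ℕ} {a : ℕ → ℕ} {ε : ℕ → ℤ} (h : IsNEGK n a ε) :
    MonotoneOn a (Set.Iio n) :=
  monotoneOn_of_le_succ Set.ordConnected_Iio fun i _ _ hi ↦ by
    rw [Order.succ_eq_add_one] at hi ⊢
    exact h.mono i hi

theorem eInv_even (a : ℕ → ℕ) {n : ℕ} (hn : Even n) : Even (eInv a n) := by
  rw [eInv, if_neg (Nat.not_odd_iff_even.2 hn)]
  exact even_two_mul _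

theorem IsNEGK.eInv_pred_le {n : ℕ} {a : ℕ → ℕ} {ε : ℕ → ℤ} (h : IsNEGK n a ε) (hn : Even n) :
    eInv a (n - 1) ≤ eInv a n := by
  have hpos := h.pos
  have hodd : Odd (n - 1) := by obtain ⟨k, rfl⟩ := hn; exact ⟨k - 1, by omega⟩
  have hsum := Finset.sum_range_succ a (n - 1)
  rw [Nat.sub_add_cancel hpos] at hsum
  have hbound : ∑ k ∈ Finset.range (n - 1), a k ≤ (n - 1) * a (n - 1) := by
    simpa using Finset.sum_le_card_nsmul (Finset.range (n - 1)) a (a (n - 1)) fun k hk ↦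
      have hk := Finset.mem_range.1 hk
      h.monotoneOn (Set.mem_Iio.2 (by omega)) (Set.mem_Iio.2 (by omega)) (by omega)
  rw [eInv, if_pos hodd, eInv, if_neg (Nat.not_odd_iff_even.2 hn), hsum]
  rcases Nat.eq_zero_or_pos (a (n - 1)) with h0 | h0
  · rw [h0, mul_zero] at hbound; omega
  · omega

theorem uGen_transcendental : Transcendental (RatFunc ℚ) uGen := RatFunc.transcendental_X

theorem vGen_eq_algebraMap : vGen = algebraMap (RatFunc ℚ) KK RatFunc.X := by
  rw [RatFunc.algebraMap_eq_C]; rfl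

theorem vGen_ne_zero : vGen ≠ 0 := by
  simp [vGen_eq_algebraMap, RatFunc.X_ne_zero]

theorem Yz_natCast (i : ℕ) : Yz i = vGen ^ (2 * i) := by
  rw [Yz, ← zpow_natCast]
  push_cast
  rfl

theorem Yz_neg_one_mul (m : ℤ) : Yz (-1) * Yz m = Yz (m - 1) := by
  rw [Yz, Yz, Yz, ← zpow_add₀ vGen_ne_zero]
  ring_nf

theorem Yz_neg_one : Yz (-1) = vGen⁻¹ ^ 2 := by
  rw [Yz, show (2 * (-1) : ℤ) = -(2 : ℕ) by norm_num, zpow_neg, zpow_natCast, inv_pow]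

theorem Yz_mem_bot (m : ℤ) : Yz m ∈ (⊥ : Subalgebra (RatFunc ℚ) KK) :=
  Algebra.mem_bot.2 ⟨RatFunc.X ^ (2 * m), by simp [Yz, vGen_eq_algebraMap, map_zpow₀]⟩

open Finset in
theorem FF_eq_of_transcendental {a : ℕ → ℕ} {ε : ℕ → ℤ} {m d : ℕ} {B : ℕ → KK}
    (hBY : ∀ i, B i ∈ (⊥ : Subalgebra (RatFunc ℚ) KK))
    (hB : uGen ^ d * FF a ε m vGen uGen = ∑ i ∈ range (d + 1), B i * uGen ^ (2 * i))
    {t : KK} (ht : Transcendental (RatFunc ℚ) t) :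
    t ^ d * FF a ε m vGen t = ∑ i ∈ range (d + 1), B i * t ^ (2 * i) := by
  set φ := RatFunc.aevalOfTranscendental ht
  have hfix : ∀ y ∈ (⊥ : Subalgebra (RatFunc ℚ) KK), φ y = y := fun y hy ↦ by
    obtain ⟨g, rfl⟩ := Algebra.mem_bot.1 hy
    exact φ.commutes g
  have hv : φ vGen = vGen := hfix _ (Algebra.mem_bot.2 ⟨_, vGen_eq_algebraMap.symm⟩)
  have hu : φ uGen = t := RatFunc.aevalOfTranscendental_X ht
  have hFF : φ (FF a ε m vGen uGen) = FF a ε m vGen t := by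
    simpa [hv, hu] using map_FF a ε (φ : KK →+* KK) m vGen uGen
  simpa [hFF, hu, hfix _ (hBY _)] using congrArg φ hB

theorem uGen_sq_pow_two_ne_one : (uGen ^ 2) ^ 2 ≠ 1 :=
  (uGen_transcendental.pow two_pos).pow_ne_one two_ne_zero

open Finset in
theorem sum_coeff_mul_one_sub_eq_sum_egkNumCoeff {a : ℕ → ℕ} {ε : ℕ → ℤ} {k : ℕ}
    (hk : Even (k + 2)) (hle : eInv a (k + 1) ≤ eInv a (k + 2)) {A : ℕ → KK}
    (hA : uGen ^ eInv a (k + 2) * FF a ε (k + 2) vGen uGen =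
      ∑ i ∈ range (eInv a (k + 2) + 1), A i * uGen ^ (2 * i))
    {B : ℤ → KK} (hB : uGen ^ eInv a (k + 1) * FF a ε (k + 1) vGen uGen =
      ∑ i ∈ range (eInv a (k + 1) + 1), B i * uGen ^ (2 * i))
    (hBY : ∀ m, B m ∈ (⊥ : Subalgebra (RatFunc ℚ) KK))
    (hB0 : ∀ m : ℤ, m < 0 ∨ (eInv a (k + 1) : ℤ) < m → B m = 0) :
    (∑ i ∈ range (eInv a (k + 2) + 1), A i * (uGen ^ 2) ^ i) * (1 - (uGen ^ 2) ^ 2) =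
      ∑ m ∈ range (eInv a (k + 2) + 3),
        egkNumCoeff (fun m ↦ B m * Yz m) ((ε (k + 1) : KK) * Yz (-1)) (eInv a (k + 2)) m *
          (uGen ^ 2) ^ m := by
  have hu : uGen ≠ 0 := RatFunc.X_ne_zero
  have hX : RatFunc.X ≠ (0 : RatFunc ℚ) := RatFunc.X_ne_zero
  have hsubst := fun t ↦ FF_eq_of_transcendental (fun i ↦ hBY i) hB (t := t)
  have h₁ : (vGen * uGen) ^ eInv a (k + 1) * FF a ε (k + 1) vGen (vGen * uGen) =
      ∑ i ∈ range (eInv a (k + 1) + 1), B i * Yz i * (uGen ^ 2) ^ i := by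
    rw [hsubst _ (by rw [vGen_eq_algebraMap]; exact uGen_transcendental.algebraMap_mul hX)]
    exact sum_congr rfl fun i _ ↦ by rw [Yz_natCast]; ring
  have h₂ : (vGen * uGen⁻¹) ^ eInv a (k + 1) * FF a ε (k + 1) vGen (vGen * uGen⁻¹) =
      ∑ i ∈ range (eInv a (k + 1) + 1), B i * Yz i * (uGen ^ 2)⁻¹ ^ i := by
    rw [hsubst _ (by rw [vGen_eq_algebraMap]; exact uGen_transcendental.inv.algebraMap_mul hX)]
    exact sum_congr rfl fun i _ ↦ by rw [Yz_natCast]; ring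
  simp only [pow_mul] at hA
  rw [sum_egkNumCoeff_mul_pow _ _ (fun m hm ↦ by rw [hB0 m hm, zero_mul]) hle
      (pow_ne_zero 2 hu), Yz_neg_one, ← hA, ← h₁, ← h₂]
  simp only [FF, if_pos hk, one_mul]
  exact Cfun_even_clear_denominators hk hle _ hu uGen_sq_pow_two_ne_one _ _

open Finset in
theorem egkCoeff_Yz_eq {B : ℤ → KK} {e et N : ℕ}
    (hB0 : ∀ m : ℤ, m < 0 ∨ (et : ℤ) < m → B m = 0) (hN : e + et + 2 ≤ N)
    (ξ : KK) {l : ℕ} (hl : l ≤ e) :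
    egkCoeff (fun m ↦ B m * Yz m) N (ξ * Yz (-1)) e l =
      (∑ j ∈ range (l + 1), B ((l : ℤ) - 2 * j) * Yz ((l : ℤ) - 2 * j)) -
        ξ * (∑ j ∈ range (l + 1), B ((l : ℤ) - 1 - 2 * j) * Yz ((l : ℤ) - 2 - 2 * j)) -
        (∑ j ∈ range (et + 1), B ((e : ℤ) + 2 - l + 2 * j) * Yz ((e : ℤ) + 2 - l + 2 * j)) +
        ξ * (∑ j ∈ range (et + 1), B ((e : ℤ) + 1 - l + 2 * j) * Yz ((e : ℤ) - l + 2 * j)) := by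
  have hshift : ∀ m m' : ℤ, m' = m - 1 → Yz (-1) * (B m * Yz m) = B m * Yz m' := by
    rintro m _ rfl
    rw [mul_left_comm, Yz_neg_one_mul]
  have h₁ : Yz (-1) * downSum (fun m ↦ B m * Yz m) (l + 1) (l - 1) =
      ∑ j ∈ range (l + 1), B ((l : ℤ) - 1 - 2 * j) * Yz ((l : ℤ) - 2 - 2 * j) := by
    rw [downSum, mul_sum]
    exact sum_congr rfl fun j _ ↦ hshift _ _ (by ring)
  have h₂ : Yz (-1) * upSum (fun m ↦ B m * Yz m) (et + 1) (e + 1 - l) =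
      ∑ j ∈ range (et + 1), B ((e : ℤ) + 1 - l + 2 * j) * Yz ((e : ℤ) - l + 2 * j) := by
    rw [upSum, mul_sum]
    exact sum_congr rfl fun j _ ↦ hshift _ _ (by ring)
  rw [egkCoeff_eq_of_le N _ e (fun m hm ↦ by simp only [hB0 m hm, zero_mul]) hN hl,
    mul_assoc, h₁, mul_assoc, h₂]
  rfl

theorem statement10_general (n : ℕ) (a : ℕ → ℕ) (ε : ℕ → ℤ) (h : IsNEGK n a ε)
    (hne : Even n)
    -- `A i = a_i(H,Y)` are the coefficients of `𝓖(H;Y,X)` (Laurent polynomials in `Y`)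
    (A : ℕ → KK)
    (hA : uGen ^ eInv a n * FF a ε n vGen uGen =
      ∑ i ∈ Finset.range (eInv a n + 1), A i * uGen ^ (2 * i))
    (hAY : ∀ i, ∃ g : RatFunc ℚ, A i = RatFunc.C g)
    -- `Bz i = a_i(H_{n-1},Y)`, extended by `0` outside `0 ≤ i ≤ 𝔢_{n-1}`
    (Bz : ℤ → KK)
    (hB : uGen ^ eInv a (n - 1) * FF a ε (n - 1) vGen uGen =
      ∑ i ∈ Finset.range (eInv a (n - 1) + 1), Bz i * uGen ^ (2 * i))
    (hBY : ∀ m : ℤ, ∃ g : RatFunc ℚ, Bz m = RatFunc.C g)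
    (hB0 : ∀ m : ℤ, (m < 0 ∨ (eInv a (n - 1) : ℤ) < m) → Bz m = 0) :
    ∀ l : ℕ, l ≤ eInv a n →
      A l =
        (∑ j ∈ Finset.range (l + 1),
            Bz ((l : ℤ) - 2 * j) * Yz ((l : ℤ) - 2 * j)) -
          ((ε (n - 1) : ℤ) : KK) *
            (∑ j ∈ Finset.range (l + 1),
              Bz ((l : ℤ) - 1 - 2 * j) * Yz ((l : ℤ) - 2 - 2 * j)) -
          (∑ j ∈ Finset.range (eInv a (n - 1) + 1),
            Bz ((eInv a n : ℤ) + 2 - l + 2 * j) * Yz ((eInv a n : ℤ) + 2 - l + 2 * j)) +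
          ((ε (n - 1) : ℤ) : KK) *
            (∑ j ∈ Finset.range (eInv a (n - 1) + 1),
              Bz ((eInv a n : ℤ) + 1 - l + 2 * j) * Yz ((eInv a n : ℤ) - l + 2 * j)) := by
  intro l hl
  obtain ⟨k, rfl⟩ : ∃ k, n = k + 2 := by
    obtain ⟨j, rfl⟩ := hne
    exact ⟨j + j - 2, by have := h.pos; omega⟩
  have hle : eInv a (k + 1) ≤ eInv a (k + 2) := h.eInv_pred_le hne
  simp only [show k + 2 - 1 = k + 1 from rfl] at hB hB0 ⊢
  have hbot := fun {x : KK} ↦ (RatFunc.mem_bot_iff_exists_C (x := x)).2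
  have hq : ∀ m : ℤ, m < 0 ∨ (eInv a (k + 1) : ℤ) < m → Bz m * Yz m = 0 := fun m hm ↦ by
    rw [hB0 m hm, zero_mul]
  have hgen := sum_coeff_mul_one_sub_eq_sum_egkNumCoeff hne hle hA hB
    (fun m ↦ hbot (hBY m)) hB0
  rw [← sum_egkCoeff_mul_pow (eInv a (k + 2) + eInv a (k + 1) + 2) _ _ hq hle
    (eInv_even a hne) le_rfl] at hgen
  have hcoeff : A l = egkCoeff (fun m ↦ Bz m * Yz m) (eInv a (k + 2) + eInv a (k + 1) + 2)
      ((ε (k + 1) : KK) * Yz (-1)) (eInv a (k + 2)) l :=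
    (uGen_transcendental.pow two_pos).coeff_eq_of_sum_eq (fun i ↦ hbot (hAY i))
      (fun i ↦ egkCoeff_mem _ _ _ _ (fun m ↦ mul_mem (hbot (hBY m)) (Yz_mem_bot m))
        (mul_mem (intCast_mem _ _) (Yz_mem_bot _)) _)
      (mul_right_cancel₀ (sub_ne_zero.2 uGen_sq_pow_two_ne_one.symm) hgen) (by omega)
  rw [hcoeff, egkCoeff_Yz_eq hB0 le_rfl _ hl]

theorem statement10 (n : ℕ) (a : ℕ → ℕ) (ε : ℕ → ℤ) (h : IsNEGK n a ε)
    (hne : Even n) (hn2 : 2 ≤ n)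
    -- `A i = a_i(H,Y)` are the coefficients of `𝓖(H;Y,X)` (Laurent polynomials in `Y`)
    (A : ℕ → KK)
    (hA : uGen ^ eInv a n * FF a ε n vGen uGen =
      ∑ i ∈ Finset.range (eInv a n + 1), A i * uGen ^ (2 * i))
    (hAY : ∀ i, ∃ g : RatFunc ℚ, A i = RatFunc.C g)
    -- `Bz i = a_i(H_{n-1},Y)`, extended by `0` outside `0 ≤ i ≤ 𝔢_{n-1}`
    (Bz : ℤ → KK)
    (hB : uGen ^ eInv a (n - 1) * FF a ε (n - 1) vGen uGen =
      ∑ i ∈ Finset.range (eInv a (n - 1) + 1), Bz i * uGen ^ (2 * i))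
    (hBY : ∀ m : ℤ, ∃ g : RatFunc ℚ, Bz m = RatFunc.C g)
    (hB0 : ∀ m : ℤ, (m < 0 ∨ (eInv a (n - 1) : ℤ) < m) → Bz m = 0) :
    ∀ l : ℕ, l ≤ eInv a n →
      A l =
        (∑ j ∈ Finset.range (l + 1),
            Bz ((l : ℤ) - 2 * j) * Yz ((l : ℤ) - 2 * j)) -
          ((ε (n - 1) : ℤ) : KK) *
            (∑ j ∈ Finset.range (l + 1),
              Bz ((l : ℤ) - 1 - 2 * j) * Yz ((l : ℤ) - 2 - 2 * j)) -
          (∑ j ∈ Finset.range (eInv a (n - 1) + 1),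
            Bz ((eInv a n : ℤ) + 2 - l + 2 * j) * Yz ((eInv a n : ℤ) + 2 - l + 2 * j)) +
          ((ε (n - 1) : ℤ) : KK) *
            (∑ j ∈ Finset.range (eInv a (n - 1) + 1),
              Bz ((eInv a n : ℤ) + 1 - l + 2 * j) * Yz ((eInv a n : ℤ) - l + 2 * j)) :=
  statement10_general n a ε h hne A hA hAY Bz hB hBY hB0
end

section
/- Let n be a positive even integer and let a_1 ≤ a_2 ≤ ⋯ ≤ a_n be nonnegative integers. For 1 ≤ i ≤ n set 𝔢_i := a_1+⋯+a_i if i is odd and 𝔢_i := 2⌊(a_1+⋯+a_i)/2⌋ if i is even. Then 2·Σ_{i=1}^{n−1} 𝔢_i ≤ (n−1)·𝔢_n. -/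
lemma einv_mono_le (n : ℕ) (a : ℕ → ℕ) (hmono : ∀ i, i + 1 < n → a i ≤ a (i + 1)) :
    ∀ d k, k + d < n → a k ≤ a (k + d) := by
  intro d
  induction d with
  | zero => intro k _; simp
  | succ d ih =>
    intro k h
    have h1 : a k ≤ a (k + d) := ih k (by omega)
    have h2 : a (k + d) ≤ a (k + d + 1) := hmono _ (by omega)
    have : k + (d + 1) = k + d + 1 := by omega
    rw [this]
    exact le_trans h1 h2

lemma einv_superadd (n : ℕ) (a : ℕ → ℕ) (hmono : ∀ i, i + 1 < n → a i ≤ a (i + 1))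
    (i : ℕ) (hi : i ≤ n) :
    (∑ k ∈ Finset.range i, a k) + ∑ k ∈ Finset.range (n - i), a k
      ≤ ∑ k ∈ Finset.range n, a k := by
  have hsplit : (∑ k ∈ Finset.range ((n - i) + i), a k)
      = (∑ k ∈ Finset.range (n - i), a k) + ∑ k ∈ Finset.range i, a ((n - i) + k) :=
    Finset.sum_range_add a (n - i) i
  have hn : (n - i) + i = n := by omega
  rw [hn] at hsplit
  rw [hsplit]
  have : (∑ k ∈ Finset.range i, a k) ≤ ∑ k ∈ Finset.range i, a ((n - i) + k) := by
    apply Finset.sum_le_sum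
    intro k hk
    simp only [Finset.mem_range] at hk
    have := einv_mono_le n a hmono (n - i) k (by omega)
    have heq : k + (n - i) = (n - i) + k := by omega
    rwa [heq] at this
  omega

lemma einv_eqcase (n : ℕ) (a : ℕ → ℕ) (hmono : ∀ i, i + 1 < n → a i ≤ a (i + 1))
    (hne : Even n) (i : ℕ) (h1 : 1 ≤ i) (hle : 2 * i ≤ n)
    (heq : (∑ k ∈ Finset.range i, a k) + ∑ k ∈ Finset.range (n - i), a k
      = ∑ k ∈ Finset.range n, a k) :
    (∑ k ∈ Finset.range n, a k) % 2 = 0 := by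
  have hsplit : (∑ k ∈ Finset.range ((n - i) + i), a k)
      = (∑ k ∈ Finset.range (n - i), a k) + ∑ k ∈ Finset.range i, a ((n - i) + k) :=
    Finset.sum_range_add a (n - i) i
  have hn : (n - i) + i = n := by omega
  rw [hn] at hsplit
  have hsum : (∑ k ∈ Finset.range i, a k) = ∑ k ∈ Finset.range i, a ((n - i) + k) := by
    omega
  have hpt : ∀ k ∈ Finset.range i, a k ≤ a ((n - i) + k) := by
    intro k hk
    simp only [Finset.mem_range] at hk
    have := einv_mono_le n a hmono (n - i) k (by omega)
    have heq' : k + (n - i) = (n - i) + k := by omega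
    rwa [heq'] at this
  have hall : ∀ k ∈ Finset.range i, a k = a ((n - i) + k) :=
    (Finset.sum_eq_sum_iff_of_le hpt).mp hsum
  have h0 : a 0 = a (n - i) := by
    have := hall 0 (Finset.mem_range.mpr (by omega))
    simpa using this
  have hl : a (i - 1) = a (n - 1) := by
    have := hall (i - 1) (Finset.mem_range.mpr (by omega))
    have : a (i - 1) = a ((n - i) + (i - 1)) := this
    rwa [show (n - i) + (i - 1) = n - 1 from by omega] at this
  -- a (i-1) ≤ a (n-i)
  have hmid : a (i - 1) ≤ a (n - i) := by
    have := einv_mono_le n a hmono ((n - i) - (i - 1)) (i - 1) (by omega)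
    rwa [show (i - 1) + ((n - i) - (i - 1)) = n - i from by omega] at this
  have htop : a (n - 1) = a 0 := by
    have h0le : a 0 ≤ a (n - 1) := by
      have := einv_mono_le n a hmono (n - 1) 0 (by omega)
      simpa using this
    omega
  have hconst : ∀ m ∈ Finset.range n, a m = a 0 := by
    intro m hm
    simp only [Finset.mem_range] at hm
    have hlo : a 0 ≤ a m := by
      have := einv_mono_le n a hmono m 0 (by omega)
      simpa using this
    have hhi : a m ≤ a (n - 1) := by
      have := einv_mono_le n a hmono ((n - 1) - m) m (by omega)
      rwa [show m + ((n - 1) - m) = n - 1 from by omega] at this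
    omega
  have hS : (∑ k ∈ Finset.range n, a k) = n * a 0 := by
    rw [Finset.sum_congr rfl hconst, Finset.sum_const, Finset.card_range, smul_eq_mul]
  obtain ⟨m, hm⟩ := hne
  rw [hS, hm]
  have : (m + m) * a 0 = 2 * (m * a 0) := by ring
  rw [this]
  omega

lemma einv_key' (n : ℕ) (a : ℕ → ℕ) (hmono : ∀ i, i + 1 < n → a i ≤ a (i + 1))
    (hne : Even n) (i : ℕ) (h1 : 1 ≤ i) (hle : 2 * i ≤ n) :
    eInv a i + eInv a (n - i) ≤ eInv a n := by
  have hs := einv_superadd n a hmono i (by omega)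
  have hn2 : n % 2 = 0 := Nat.even_iff.mp hne
  by_cases hoi : Odd i
  · have hi2 : i % 2 = 1 := Nat.odd_iff.mp hoi
    have hoj : Odd (n - i) := Nat.odd_iff.mpr (by omega)
    have hnotn : ¬ Odd n := by rw [Nat.odd_iff]; omega
    rw [eInv, eInv, eInv, if_pos hoi, if_pos hoj, if_neg hnotn]
    by_cases hcase : (∑ k ∈ Finset.range i, a k) + ∑ k ∈ Finset.range (n - i), a k
        = ∑ k ∈ Finset.range n, a k
    · have := einv_eqcase n a hmono hne i h1 hle hcase
      omega
    · omega
  · have hi2 : i % 2 = 0 := Nat.even_iff.mp (Nat.not_odd_iff_even.mp hoi)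
    have hoj : ¬ Odd (n - i) := by rw [Nat.odd_iff]; omega
    have hnotn : ¬ Odd n := by rw [Nat.odd_iff]; omega
    rw [eInv, eInv, eInv, if_neg hoi, if_neg hoj, if_neg hnotn]
    omega

lemma einv_key (n : ℕ) (a : ℕ → ℕ) (hmono : ∀ i, i + 1 < n → a i ≤ a (i + 1))
    (hne : Even n) (i : ℕ) (h1 : 1 ≤ i) (h2 : i < n) :
    eInv a i + eInv a (n - i) ≤ eInv a n := by
  rcases le_or_gt (2 * i) n with h | h
  · exact einv_key' n a hmono hne i h1 h
  · have := einv_key' n a hmono hne (n - i) (by omega) (by omega)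
    rw [show n - (n - i) = i from by omega] at this
    omega

theorem statement16 (n : ℕ) (hn : 0 < n) (hne : Even n)
    (a : ℕ → ℕ) (hmono : ∀ i, i + 1 < n → a i ≤ a (i + 1)) :
    2 * ∑ i ∈ Finset.Icc 1 (n - 1), eInv a i ≤ (n - 1) * eInv a n := by
  have h2 : 2 ≤ n := by
    obtain ⟨m, hm⟩ := hne; omega
  have reindex : ∑ i ∈ Finset.Icc 1 (n - 1), eInv a (n - i)
      = ∑ i ∈ Finset.Icc 1 (n - 1), eInv a i := by
    refine Finset.sum_nbij' (fun i => n - i) (fun i => n - i) ?_ ?_ ?_ ?_ ?_ <;>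
        simp only [Finset.mem_Icc] <;> intro x hx
    · omega
    · omega
    · omega
    · omega
    · trivial
  calc 2 * ∑ i ∈ Finset.Icc 1 (n - 1), eInv a i
      = ∑ i ∈ Finset.Icc 1 (n - 1), eInv a i
        + ∑ i ∈ Finset.Icc 1 (n - 1), eInv a (n - i) := by rw [reindex]; ring
    _ = ∑ i ∈ Finset.Icc 1 (n - 1), (eInv a i + eInv a (n - i)) := by
        rw [Finset.sum_add_distrib]
    _ ≤ ∑ _i ∈ Finset.Icc 1 (n - 1), eInv a n := by
        apply Finset.sum_le_sum
        intro i hi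
        simp only [Finset.mem_Icc] at hi
        exact einv_key n a hmono hne i (by omega) (by omega)
    _ = (n - 1) * eInv a n := by
        rw [Finset.sum_const, Nat.card_Icc, smul_eq_mul,
          show n - 1 + 1 - 1 = n - 1 from by omega]
end
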